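/- Let Π be a ground logic program over atoms A with rules indexed by a finite type R, and let T(Π) be its transformed program over A ⊎ R. If M' ⊆ A ⊎ R is a stable model of T(Π), then for every original atom a ∈ M' ∩ A there exists a rule r of Π with head(r) = a whose body is true in M' ∩ A, i.e. body⁺(r) ⊆ M' ∩ A and body⁻(r) ∩ (M' ∩ A) = ∅. -/

import Mathlib

/-- A ground rule: head ← body⁺, not body⁻. -/
structure Rule (A : Type*) where
  head : A
  bodyPos : Finset A
  bodyNeg : Finset A
deriving DecidableEq

/-- The body of rule `r` is true in interpretation `M`:
`body⁺(r) ⊆ M` and `body⁻(r) ∩ M = ∅`. -/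
def BodyTrue {A : Type*} (M : Set A) (r : Rule A) : Prop :=
  ↑r.bodyPos ⊆ M ∧ ∀ a ∈ r.bodyNeg, a ∉ M

/-- `M` is a model of the program `P` (a family of rules indexed by `R`). -/
def IsModel {A R : Type*} (P : R → Rule A) (M : Set A) : Prop :=
  ∀ r, BodyTrue M (P r) → (P r).head ∈ M

/-- `M` is a supported model of `P`: a model in which every true atom
is the head of some rule of `P` whose body is true in `M`. -/
def IsSupported {A R : Type*} (P : R → Rule A) (M : Set A) : Prop :=
  IsModel P M ∧ ∀ a ∈ M, ∃ r, (P r).head = a ∧ ↑(P r).bodyPos ⊆ M ∧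
    ∀ b ∈ (P r).bodyNeg, b ∉ M

/-- `N` is a model of the Gelfond–Lifschitz reduct `P^M`: for every rule of `P`
surviving the reduct (i.e. with `body⁻(r) ∩ M = ∅`), whose negative literals are
removed, if its positive body holds in `N` then so does its head. -/
def ReductModel {A R : Type*} (P : R → Rule A) (M N : Set A) : Prop :=
  ∀ r, (∀ a ∈ (P r).bodyNeg, a ∉ M) → ↑(P r).bodyPos ⊆ N → (P r).head ∈ N

/-- `M` is a stable model of `P`: `M` is the least model of the reduct `P^M`. -/
def IsStable {A R : Type*} (P : R → Rule A) (M : Set A) : Prop :=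
  ReductModel P M M ∧ ∀ N, ReductModel P M N → M ⊆ N

/-- Index type for the rules of the transformed program `T(P)`: one rule
`head(r) ← not dm_r` per rule `r`, one rule `dm_r ← not l` per `l ∈ body⁺(r)`,
and one rule `dm_r ← l` per `l ∈ body⁻(r)`. -/
abbrev TransIdx {A R : Type*} (P : R → Rule A) : Type _ :=
  R ⊕ ((Σ r : R, {l // l ∈ (P r).bodyPos}) ⊕ (Σ r : R, {l // l ∈ (P r).bodyNeg}))

/-- The transformed program `T(P)` over atoms `A ⊕ R`, where `Sum.inr r`
plays the role of the fresh auxiliary atom `dm_r`. -/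
def Transform {A R : Type*} (P : R → Rule A) : TransIdx P → Rule (A ⊕ R)
  | Sum.inl r => ⟨Sum.inl (P r).head, ∅, {Sum.inr r}⟩
  | Sum.inr (Sum.inl ⟨r, l⟩) => ⟨Sum.inr r, ∅, {Sum.inl l.1}⟩
  | Sum.inr (Sum.inr ⟨r, l⟩) => ⟨Sum.inr r, {Sum.inl l.1}, ∅⟩

/-- `Lift P M = M ∪ { dm_r | the body of rule r is false in M }`,
viewing `M ⊆ A` as a subset of `A ⊕ R` via the left injection. -/
def Lift {A R : Type*} (P : R → Rule A) (M : Set A) : Set (A ⊕ R) :=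
  Sum.inl '' M ∪ Sum.inr '' {r | ¬ BodyTrue M (P r)}

/-
A stable model is supported, so an original atom `a ∈ M'` is the head of a rule of `T(Π)` whose
body holds in `M'`. The only such rules are `a ← not dm_r` with `head(r) = a`, so `dm_r ∉ M'`.
Since `M'` is a model of `T(Π)`, the rules `dm_r ← not l` and `dm_r ← l` then force the body of
`r` to be true in `M' ∩ A`.
-/

section

variable {A R : Type*}

theorem reductModel_self_iff_isModel (P : R → Rule A) (M : Set A) :
    ReductModel P M M ↔ IsModel P M :=
  ⟨fun h r hr => h r hr.2 hr.1, fun h r hneg hpos => h r ⟨hpos, hneg⟩⟩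

theorem IsStable.isModel {P : R → Rule A} {M : Set A} (h : IsStable P M) : IsModel P M :=
  (reductModel_self_iff_isModel P M).1 h.1

/-- Without a supporting rule for `x`, the set `M \ {x}` would still be a model of the reduct. -/
theorem IsStable.isSupported {P : R → Rule A} {M : Set A} (h : IsStable P M) :
    IsSupported P M := by
  refine ⟨h.isModel, fun x hx => ?_⟩
  by_contra hunsupported
  have hreduct : ReductModel P M (M \ {x}) := fun r hneg hpos =>
    ⟨h.1 r hneg (hpos.trans Set.sdiff_subset),
      fun hx' => hunsupported ⟨r, hx', hpos.trans Set.sdiff_subset, hneg⟩⟩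
  exact (h.2 _ hreduct hx).2 rfl

theorem Transform.bodyTrue_of_inr_notMem {P : R → Rule A} {M' : Set (A ⊕ R)}
    (hM' : IsModel (Transform P) M') {r : R} (hr : Sum.inr r ∉ M') :
    BodyTrue (Sum.inl ⁻¹' M') (P r) := by
  constructor
  · intro l hl
    by_contra hlM'
    exact hr (hM' (Sum.inr (Sum.inl ⟨r, l, hl⟩)) ⟨by simp [Transform], by simpa [Transform]⟩)
  · intro l hl hlM'
    exact hr (hM' (Sum.inr (Sum.inr ⟨r, l, hl⟩)) ⟨by simpa [Transform], by simp [Transform]⟩)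

end

theorem stable_model_of_transform_atoms_supported_general
    {A R : Type*} (P : R → Rule A) (M' : Set (A ⊕ R))
    (h : IsStable (Transform P) M') :
    ∀ a ∈ Sum.inl ⁻¹' M', ∃ r, (P r).head = a ∧
      ↑(P r).bodyPos ⊆ Sum.inl ⁻¹' M' ∧
      ∀ b ∈ (P r).bodyNeg, b ∉ Sum.inl ⁻¹' M' := by
  intro a ha
  obtain ⟨s, hhead, -, hbodyNeg⟩ := h.isSupported.2 (Sum.inl a) ha
  rcases s with r | ⟨r, l⟩ | ⟨r, l⟩
  · have hdm : Sum.inr r ∉ M' := hbodyNeg (Sum.inr r) (by simp [Transform])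
    exact ⟨r, Sum.inl_injective hhead, Transform.bodyTrue_of_inr_notMem h.isModel hdm⟩
  all_goals simp [Transform] at hhead

/-- If `M'` is a stable model of `T(P)`, then every original atom
`a ∈ M' ∩ A` is the head of some rule of `P` whose body is true in `M' ∩ A`. -/
theorem stable_model_of_transform_atoms_supported
    {A R : Type*} [Fintype R] (P : R → Rule A) (M' : Set (A ⊕ R))
    (h : IsStable (Transform P) M') :
    ∀ a ∈ Sum.inl ⁻¹' M', ∃ r, (P r).head = a ∧
      ↑(P r).bodyPos ⊆ Sum.inl ⁻¹' M' ∧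
      ∀ b ∈ (P r).bodyNeg, b ∉ Sum.inl ⁻¹' M' :=
  stable_model_of_transform_atoms_supported_general P M' h
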